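/- The 4-dimensional complex algebra d₇₄ with basis e₁, e₂, e₃, e₄ and nonzero products e₃·e₃ = e₂, e₄·e₁ = e₂, e₁·e₄ = e₂, e₄·e₃ = e₁, e₃·e₄ = e₁, e₄·e₄ = e₃ is associative, commutative, and satisfies A⁵ = 0 but A⁴ ≠ 0; in fact it is isomorphic to the algebra x·ℂ[x]/(x⁵) via e₄ ↦ x, e₃ ↦ x², e₁ ↦ x³, e₂ ↦ x⁴. -/

import Mathlib

/-- The multiplication of the algebra `d₇₄` on `ℂ⁴` with basis `e₁,…,e₄`:
`e₃e₃ = e₂`, `e₄e₁ = e₂`, `e₁e₄ = e₂`, `e₄e₃ = e₁`, `e₃e₄ = e₁`, `e₄e₄ = e₃`,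
all other basis products zero (0-indexed components). -/
def mul74 (x y : Fin 4 → ℂ) : Fin 4 → ℂ :=
  ![x 3 * y 2 + x 2 * y 3,
    x 2 * y 2 + x 3 * y 0 + x 0 * y 3,
    x 3 * y 3, 0]

/-- The map `e₄ ↦ x`, `e₃ ↦ x²`, `e₁ ↦ x³`, `e₂ ↦ x⁴` into `ℂ[x]/(x⁵)`. -/
noncomputable def phi74 (v : Fin 4 → ℂ) :
    Polynomial ℂ ⧸ Ideal.span {(Polynomial.X : Polynomial ℂ) ^ 5} :=
  Ideal.Quotient.mk _
    (Polynomial.C (v 3) * Polynomial.X + Polynomial.C (v 2) * Polynomial.X ^ 2 +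
      Polynomial.C (v 0) * Polynomial.X ^ 3 + Polynomial.C (v 1) * Polynomial.X ^ 4)

/-! The map `phi74` sends `v` to the class of a polynomial `poly74 v` of degree `≤ 4` without
constant term, and the product `mul74` is exactly multiplication of such polynomials with the
terms of degree `≥ 5` discarded. A class modulo `X ^ 5` is determined by its coefficients of
degree `< 5`, which gives injectivity and identifies the image with the multiples of `X`.
Associativity and commutativity of `mul74` are then inherited from the quotient ring. -/

open Polynomial

theorem Polynomial.mk_span_X_pow_eq_mk_iff {R : Type*} [CommRing R] {n : ℕ} {p q : R[X]} :
    Ideal.Quotient.mk (Ideal.span {X ^ n}) p = Ideal.Quotient.mk _ q ↔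
      ∀ d < n, p.coeff d = q.coeff d := by
  simp only [Ideal.Quotient.eq, Ideal.mem_span_singleton, X_pow_dvd_iff, coeff_sub, sub_eq_zero]

noncomputable def poly74 (v : Fin 4 → ℂ) : ℂ[X] :=
  C (v 3) * X + C (v 2) * X ^ 2 + C (v 0) * X ^ 3 + C (v 1) * X ^ 4

def ofCoeffs74 (p : ℂ[X]) : Fin 4 → ℂ :=
  ![p.coeff 3, p.coeff 4, p.coeff 2, p.coeff 1]

theorem ofCoeffs74_poly74 : Function.LeftInverse ofCoeffs74 poly74 := by
  intro v
  funext i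
  fin_cases i <;> simp [ofCoeffs74, poly74, coeff_X_pow]

theorem poly74_add (v w : Fin 4 → ℂ) : poly74 (v + w) = poly74 v + poly74 w := by
  simp only [poly74, Pi.add_apply, C_add]
  ring

theorem poly74_smul (c : ℂ) (v : Fin 4 → ℂ) : poly74 (c • v) = c • poly74 v := by
  simp only [poly74, Pi.smul_apply, smul_eq_mul, C_mul, smul_eq_C_mul]
  ring

theorem phi74_eq_mk (v : Fin 4 → ℂ) : phi74 v = Ideal.Quotient.mk _ (poly74 v) := rfl

theorem phi74_add (v w : Fin 4 → ℂ) : phi74 (v + w) = phi74 v + phi74 w := by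
  simp only [phi74_eq_mk, poly74_add, map_add]

theorem phi74_smul (c : ℂ) (v : Fin 4 → ℂ) : phi74 (c • v) = c • phi74 v := by
  simp only [phi74_eq_mk, poly74_smul, ← Ideal.Quotient.mkₐ_eq_mk ℂ, map_smul]

theorem phi74_ofCoeffs74 {p : ℂ[X]} (hp : p.coeff 0 = 0) :
    phi74 (ofCoeffs74 p) = Ideal.Quotient.mk _ p := by
  rw [phi74_eq_mk, mk_span_X_pow_eq_mk_iff]
  intro d hd
  interval_cases d <;> simp [ofCoeffs74, poly74, coeff_X_pow, hp]

theorem phi74_injective : Function.Injective phi74 := by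
  intro v w h
  rw [phi74_eq_mk, phi74_eq_mk, mk_span_X_pow_eq_mk_iff] at h
  rw [← ofCoeffs74_poly74 v, ← ofCoeffs74_poly74 w]
  simp only [ofCoeffs74, h 1 (by norm_num), h 2 (by norm_num), h 3 (by norm_num),
    h 4 (by norm_num)]

theorem phi74_mul74 (v w : Fin 4 → ℂ) : phi74 (mul74 v w) = phi74 v * phi74 w := by
  rw [phi74_eq_mk, phi74_eq_mk, phi74_eq_mk, ← map_mul, Ideal.Quotient.eq,
    Ideal.mem_span_singleton]
  -- minus the part of `poly74 v * poly74 w` of degree `≥ 5`, divided by `X ^ 5`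
  refine ⟨-(C (v 3 * w 1 + v 2 * w 0 + v 0 * w 2 + v 1 * w 3) +
      C (v 2 * w 1 + v 0 * w 0 + v 1 * w 2) * X + C (v 0 * w 1 + v 1 * w 0) * X ^ 2 +
      C (v 1 * w 1) * X ^ 3), ?_⟩
  simp only [poly74, mul74, Matrix.cons_val, C_add, C_mul, C_0]
  ring

theorem range_phi74 : Set.range phi74 =
    (Ideal.span {Ideal.Quotient.mk (Ideal.span {(X : ℂ[X]) ^ 5}) X} : Set _) := by
  ext y
  simp only [Set.mem_range, SetLike.mem_coe, Ideal.mem_span_singleton']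
  constructor
  · rintro ⟨v, rfl⟩
    refine ⟨Ideal.Quotient.mk _ (C (v 3) + C (v 2) * X + C (v 0) * X ^ 2 + C (v 1) * X ^ 3), ?_⟩
    rw [phi74_eq_mk, poly74, ← map_mul]
    congr 1
    ring
  · rintro ⟨z, rfl⟩
    obtain ⟨p, rfl⟩ := Ideal.Quotient.mk_surjective z
    exact ⟨ofCoeffs74 (X * p), by rw [phi74_ofCoeffs74 (coeff_X_mul_zero p), map_mul, mul_comm]⟩

theorem mul74_assoc (x y z : Fin 4 → ℂ) : mul74 (mul74 x y) z = mul74 x (mul74 y z) :=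
  phi74_injective (by simp only [phi74_mul74, mul_assoc])

theorem mul74_comm (x y : Fin 4 → ℂ) : mul74 x y = mul74 y x :=
  phi74_injective (by simp only [phi74_mul74, mul_comm])

theorem mul74_mul74_mul74_mul74_eq_zero (a b c d e : Fin 4 → ℂ) :
    mul74 (mul74 (mul74 (mul74 a b) c) d) e = 0 := by
  funext i
  fin_cases i <;> simp [mul74]

theorem mul74_e4_e4_e4_e4_ne_zero :
    mul74 (mul74 (mul74 ![0, 0, 0, 1] ![0, 0, 0, 1]) ![0, 0, 0, 1]) ![0, 0, 0, 1] ≠ 0 := by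
  intro h
  simpa [mul74] using congrFun h 1

theorem d74_properties :
    (∀ x y z : Fin 4 → ℂ, mul74 (mul74 x y) z = mul74 x (mul74 y z)) ∧
    (∀ x y : Fin 4 → ℂ, mul74 x y = mul74 y x) ∧
    (∀ a b c d e : Fin 4 → ℂ, mul74 (mul74 (mul74 (mul74 a b) c) d) e = 0) ∧
    (∃ a b c d : Fin 4 → ℂ, mul74 (mul74 (mul74 a b) c) d ≠ 0) ∧
    Function.Injective phi74 ∧
    (∀ v w : Fin 4 → ℂ, phi74 (v + w) = phi74 v + phi74 w) ∧
    (∀ (c : ℂ) (v : Fin 4 → ℂ), phi74 (c • v) = c • phi74 v) ∧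
    (∀ v w : Fin 4 → ℂ, phi74 (mul74 v w) = phi74 v * phi74 w) ∧
    Set.range phi74 =
      (Ideal.span {Ideal.Quotient.mk (Ideal.span {(Polynomial.X : Polynomial ℂ) ^ 5})
        Polynomial.X} : Set (Polynomial ℂ ⧸ Ideal.span {(Polynomial.X : Polynomial ℂ) ^ 5})) := by
  exact ⟨mul74_assoc, mul74_comm, mul74_mul74_mul74_mul74_eq_zero,
    ⟨_, _, _, _, mul74_e4_e4_e4_e4_ne_zero⟩, phi74_injective, phi74_add, phi74_smul,
    phi74_mul74, range_phi74⟩
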